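/- Let k ≥ 1, let a, b ∈ {1, 2, ..., 2k+1} both be odd, and let H_1, H_2, ..., H_{2k+1} be graphs each with n vertices. If the generalized lexicographic product P_{2k+1}[H_1, H_2, ..., H_{2k+1}] contains a Hamiltonian path starting in a vertex of the copy of H_a and ending in a vertex of the copy of H_b, then the sum over i = 0, ..., k of π(H_{2i+1}) is at least n − 1. -/

import Mathlib

open SimpleGraph Finset

/-- The generalized lexicographic product `G[H₁,…,Hₘ]` of a graph `G` on vertices
`u_1, …, u_m` (indexed by `Fin m`, so `u_i` corresponds to index `i-1`) and graphs
`H 0, …, H (m-1)`, each on `n` vertices: each vertex `i` of `G` is replaced by a copy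
of `H i`, and all edges are added between the copies of `H i` and `H j` whenever
`i` and `j` are adjacent in `G`. -/
def genLexProd {m n : ℕ} (G : SimpleGraph (Fin m)) (H : Fin m → SimpleGraph (Fin n)) :
    SimpleGraph (Fin m × Fin n) where
  Adj p q := G.Adj p.1 q.1 ∨ (p.1 = q.1 ∧ (H p.1).Adj p.2 q.2)
  symm := by
    constructor
    rintro p q (h | ⟨h1, h2⟩)
    · exact Or.inl h.symm
    · exact Or.inr ⟨h1.symm, by rw [← h1]; exact h2.symm⟩
  loopless := by
    constructor
    rintro p (h | ⟨-, h2⟩)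
    · exact G.loopless.irrefl _ h
    · exact (H p.1).loopless.irrefl _ h2

/-- The lexicographic product `G[H]`. -/
def lexProd {α β : Type*} (G : SimpleGraph α) (H : SimpleGraph β) :
    SimpleGraph (α × β) where
  Adj p q := G.Adj p.1 q.1 ∨ (p.1 = q.1 ∧ H.Adj p.2 q.2)
  symm := by
    constructor
    rintro p q (h | ⟨h1, h2⟩)
    · exact Or.inl h.symm
    · exact Or.inr ⟨h1.symm, h2.symm⟩
  loopless := by
    constructor
    rintro p (h | ⟨-, h2⟩)
    · exact G.loopless.irrefl _ h
    · exact H.loopless.irrefl _ h2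

/-- A linear forest: an acyclic graph in which every vertex has degree at most `2`,
i.e. a forest all of whose components are paths. -/
def SimpleGraph.IsLinearForest {V : Type*} (F : SimpleGraph V) : Prop :=
  F.IsAcyclic ∧ ∀ v : V, (F.neighborSet v).ncard ≤ 2

/-- `piLF H` is `π(H)`: the maximum number of edges of a spanning linear forest of `H`.
(A spanning subgraph of `H` is a graph on the same vertex set all of whose edges are
edges of `H`, i.e. a graph `F ≤ H`.) -/
noncomputable def piLF {V : Type*} (H : SimpleGraph V) : ℕ :=
  sSup {m : ℕ | ∃ F : SimpleGraph V, F ≤ H ∧ F.IsLinearForest ∧ F.edgeSet.ncard = m}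

/-- A graph is traceable if it contains a hamiltonian path. -/
def SimpleGraph.IsTraceable {V : Type*} [DecidableEq V] (G : SimpleGraph V) : Prop :=
  ∃ (u v : V) (p : G.Walk u v), p.IsHamiltonian

/-- A graph is hamiltonian connected if any two distinct vertices are joined by a
hamiltonian path. -/
def SimpleGraph.IsHamiltonianConnected {V : Type*} [DecidableEq V] (G : SimpleGraph V) : Prop :=
  ∀ u v : V, u ≠ v → ∃ p : G.Walk u v, p.IsHamiltonian

/-!
The edges of a hamiltonian path of `P_{2k+1}[H_1, …, H_{2k+1}]` form a linear forest with
`(2k+1)n - 1` edges. Since every vertex has degree at most two in it, at most `2kn` of these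
edges meet one of the `kn` vertices of the even-numbered copies. The odd-numbered vertices of
`P_{2k+1}` are pairwise non-adjacent, so every other edge lies inside one odd-numbered copy of
some `H_i`, and the edges inside that copy form a linear forest of `H_i`: there are at most
`π(H_i)` of them.
-/

namespace SimpleGraph

variable {V W : Type*}

-- `IsLinearForest` bounds degrees through `ncard`, which is `0` on infinite sets.
lemma IsLinearForest.comap [Finite V] {F : SimpleGraph V} (hF : F.IsLinearForest) (f : W ↪ V) :
    (F.comap f).IsLinearForest := by
  refine ⟨hF.1.of_comap f, fun w => ?_⟩
  calc ((F.comap f).neighborSet w).ncard = (f '' (F.comap f).neighborSet w).ncard :=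
        (Set.ncard_image_of_injective _ f.injective).symm
    _ ≤ (F.neighborSet (f w)).ncard := Set.ncard_le_ncard (Set.image_subset_iff.mpr fun _ h => h)
    _ ≤ 2 := hF.2 _

lemma IsLinearForest.ncard_edgeSet_le_piLF [Finite V] {F H : SimpleGraph V} (hF : F.IsLinearForest)
    (hFH : F ≤ H) : F.edgeSet.ncard ≤ piLF H := by
  refine le_csSup ⟨Nat.card (Sym2 V), ?_⟩ ⟨F, hFH, hF, rfl⟩
  rintro _ ⟨F', -, -, rfl⟩
  exact Set.ncard_le_card _

namespace Walk

variable {G : SimpleGraph V} {u v : V} {p : G.Walk u v}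

lemma IsPath.ncard_neighborSet_toSubgraph_le_two (hp : p.IsPath) (w : V) :
    (p.toSubgraph.neighborSet w).ncard ≤ 2 := by
  by_cases hw : w ∈ p.support
  · obtain ⟨i, rfl, hi⟩ := mem_support_iff_exists_getVert.mp hw
    by_cases hnil : p.Nil
    · have : p.toSubgraph.neighborSet (p.getVert i) = ∅ :=
        Set.eq_empty_of_forall_notMem fun x hx => by
          obtain ⟨j, -, hj⟩ := p.toSubgraph_adj_iff.mp hx
          rw [length_eq_zero_iff.mpr hnil] at hj
          exact Nat.not_lt_zero j hj
      simp [this]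
    rcases Nat.eq_zero_or_pos i with rfl | hi0
    · rw [getVert_zero, hp.neighborSet_toSubgraph_startpoint hnil, Set.ncard_singleton]; omega
    rcases hi.lt_or_eq with hlt | rfl
    · rw [hp.ncard_neighborSet_toSubgraph_internal_eq_two hi0.ne' hlt]
    · rw [getVert_length, hp.neighborSet_toSubgraph_endpoint hnil, Set.ncard_singleton]; omega
  · have : p.toSubgraph.neighborSet w = ∅ :=
      Set.eq_empty_of_forall_notMem fun x hx =>
        hw (p.mem_verts_toSubgraph.mp (p.toSubgraph.edge_vert hx))
    simp [this]

lemma ncard_edgeSet_toSubgraph_of_isPath (hp : p.IsPath) :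
    p.toSubgraph.spanningCoe.edgeSet.ncard = p.length := by
  classical
  rw [Subgraph.edgeSet_spanningCoe, edgeSet_toSubgraph, ← length_edges,
    ← List.toFinset_card_of_nodup hp.edges_nodup, ← Set.ncard_coe_finset]
  congr 1
  ext
  simp

lemma IsHamiltonian.isTree_spanningCoe_toSubgraph [Fintype V] [DecidableEq V]
    (hp : p.IsHamiltonian) : p.toSubgraph.spanningCoe.IsTree := by
  have : Nonempty V := ⟨u⟩
  refine isTree_iff_connected_and_card.mpr ⟨?_, ?_⟩
  · exact ⟨fun a b =>
      (p.toSubgraph_connected.preconnected ⟨a, p.mem_verts_toSubgraph.mpr (hp.mem_support a)⟩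
        ⟨b, p.mem_verts_toSubgraph.mpr (hp.mem_support b)⟩).map
        (⟨Subtype.val, id⟩ : p.toSubgraph.coe →g p.toSubgraph.spanningCoe)⟩
  · rw [Nat.card_coe_set_eq, ncard_edgeSet_toSubgraph_of_isPath hp.isPath, hp.length_eq,
      Nat.card_eq_fintype_card]
    have := Fintype.card_pos (α := V)
    omega

lemma IsHamiltonian.isLinearForest_spanningCoe_toSubgraph [Fintype V] [DecidableEq V]
    (hp : p.IsHamiltonian) : p.toSubgraph.spanningCoe.IsLinearForest :=
  ⟨hp.isTree_spanningCoe_toSubgraph.isAcyclic, hp.isPath.ncard_neighborSet_toSubgraph_le_two⟩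

end Walk

lemma ncard_incidenceSet_eq_ncard_neighborSet (F : SimpleGraph V) (v : V) :
    (F.incidenceSet v).ncard = (F.neighborSet v).ncard := by
  classical
  rw [← Nat.card_coe_set_eq, ← Nat.card_coe_set_eq]
  exact Nat.card_congr (F.incidenceSetEquivNeighborSet v)

section genLexProd

open Function.Embedding

variable {m n : ℕ} {G : SimpleGraph (Fin m)} {H : Fin m → SimpleGraph (Fin n)}
  {F : SimpleGraph (Fin m × Fin n)}

lemma comap_sectR_le_of_le_genLexProd (hFG : F ≤ genLexProd G H) (i : Fin m) :
    F.comap (sectR i (Fin n)) ≤ H i := fun _ _ huw =>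
  ((hFG huw).resolve_left (G.loopless.irrefl i)).2

lemma exists_mem_image_edgeSet_comap_sectR (hFG : F ≤ genLexProd G H) {I : Set (Fin m)}
    (hI : G.IsIndepSet I) {e : Sym2 (Fin m × Fin n)} (he : e ∈ F.edgeSet)
    (heI : ∀ v ∈ e, v.1 ∈ I) :
    ∃ i ∈ I, e ∈ Sym2.map (sectR i (Fin n)) '' (F.comap (sectR i (Fin n))).edgeSet := by
  induction e using Sym2.ind with | h a b => ?_
  obtain ⟨i, x⟩ := a
  obtain ⟨j, y⟩ := b
  rcases hFG he with hij | ⟨hij, -⟩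
  · exact absurd hij (hI (heI _ (Sym2.mem_mk_left _ _)) (heI _ (Sym2.mem_mk_right _ _)) hij.ne)
  · obtain rfl : i = j := hij
    exact ⟨i, heI _ (Sym2.mem_mk_left _ _), s(x, y), he, rfl⟩

lemma IsLinearForest.ncard_edgeSet_le_of_le_genLexProd (hF : F.IsLinearForest)
    (hFG : F ≤ genLexProd G H) {I : Finset (Fin m)} (hI : G.IsIndepSet I) :
    F.edgeSet.ncard ≤ 2 * (#Iᶜ * n) + ∑ i ∈ I, piLF (H i) := by
  classical
  set T : Finset (Fin m × Fin n) := Iᶜ ×ˢ univ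
  have hcover : F.edgeSet ⊆ (⋃ v ∈ T, F.incidenceSet v) ∪
      ⋃ i ∈ I, Sym2.map (sectR i (Fin n)) '' (F.comap (sectR i (Fin n))).edgeSet := by
    intro e he
    by_cases heI : ∀ v ∈ e, v.1 ∈ I
    · obtain ⟨i, hi, hei⟩ := exists_mem_image_edgeSet_comap_sectR hFG hI he heI
      exact Or.inr (Set.mem_biUnion hi hei)
    · obtain ⟨v, hve, hvI⟩ : ∃ v ∈ e, v.1 ∉ I := by simpa using heI
      exact Or.inl (Set.mem_biUnion (by simpa [T] using hvI) ⟨he, hve⟩)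
  calc F.edgeSet.ncard
      ≤ ∑ v ∈ T, (F.incidenceSet v).ncard +
          ∑ i ∈ I, (Sym2.map (sectR i (Fin n)) '' (F.comap (sectR i (Fin n))).edgeSet).ncard :=
        (Set.ncard_le_ncard hcover).trans <| (Set.ncard_union_le _ _).trans <|
          add_le_add (T.set_ncard_biUnion_le _) (I.set_ncard_biUnion_le _)
    _ ≤ ∑ v ∈ T, 2 + ∑ i ∈ I, piLF (H i) := by
        gcongr with v _ i _
        · rw [ncard_incidenceSet_eq_ncard_neighborSet]
          exact hF.2 v
        · exact (Set.ncard_image_le (Set.toFinite _)).trans <|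
            (hF.comap _).ncard_edgeSet_le_piLF (comap_sectR_le_of_le_genLexProd hFG i)
    _ = 2 * (#Iᶜ * n) + ∑ i ∈ I, piLF (H i) := by simp [T, card_product, mul_comm]

end genLexProd

lemma pathGraph_isIndepSet_setOf_even (m : ℕ) : (pathGraph m).IsIndepSet {i | Even (i : ℕ)} := by
  rintro i (hi : Even (i : ℕ)) j (hj : Even (j : ℕ)) - hij
  rw [pathGraph_adj] at hij
  rw [Nat.even_iff] at hi hj
  omega

end SimpleGraph

theorem odd_path_hampath_odd_odd (k n : ℕ)
    (H : Fin (2 * k + 1) → SimpleGraph (Fin n))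
    (x y : Fin (2 * k + 1) × Fin n)
    (p : (genLexProd (pathGraph (2 * k + 1)) H).Walk x y) (hp : p.IsHamiltonian) :
    n - 1 ≤ ∑ i : Fin (k + 1), piLF (H ⟨2 * i.1, by have := i.2; omega⟩) := by
  let evens : Fin (k + 1) ↪ Fin (2 * k + 1) :=
    ⟨fun i => ⟨2 * i.1, by omega⟩, fun i j h => Fin.ext (by simpa using h)⟩
  have hI : (pathGraph (2 * k + 1)).IsIndepSet (univ.map evens : Set _) :=
    (pathGraph_isIndepSet_setOf_even _).mono fun _ hi => by
      obtain ⟨i, -, rfl⟩ := Finset.mem_map.mp hi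
      exact even_two_mul _
  have hbound := hp.isLinearForest_spanningCoe_toSubgraph.ncard_edgeSet_le_of_le_genLexProd
    p.toSubgraph.spanningCoe_le hI
  rw [Walk.ncard_edgeSet_toSubgraph_of_isPath hp.isPath, hp.length_eq, sum_map, card_compl,
    card_map, card_univ, Fintype.card_prod, Fintype.card_fin, Fintype.card_fin, Fintype.card_fin,
    show 2 * k + 1 - (k + 1) = k by omega, show (2 * k + 1) * n = 2 * (k * n) + n by ring]
    at hbound
  change n - 1 ≤ ∑ i, piLF (H (evens i))
  omega
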